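/- arXiv:0709.0707 — 9 statements merged into one kernel-verified Lean document; each statement's English description precedes it below -/
import Mathlib

section
/- Let u_1,…,u_k be unit vectors in ℝ^n and λ_i > 0 with ∑ λ_i u_i u_i^T = I_n and ∑ λ_i u_i = 0. Then for any symmetric positive definite matrix X and any c ∈ ℝ^n such that ⟨X(u_i−c), u_i−c⟩ ≤ 1 for all i, one has det(X)^{1/n} + ⟨Xc, c⟩ ≤ 1. -/
/-!
Averaging the constraints `⟪X (u i - c), u i - c⟫ ≤ 1` with the weights `lam i` gives
`tr X + n ⟪X c, c⟫ ≤ n`: the frame identity `∑ lam i • u i u iᵀ = 1` turns the quadratic terms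
into `tr X`, the centering `∑ lam i • u i = 0` kills the cross terms, and the trace of the frame
identity gives `∑ lam i = n`. AM-GM on the eigenvalues of `X` then bounds `det X ^ (1/n)`
by `tr X / n`.
-/
open scoped RealInnerProductSpace
open Matrix

theorem Matrix.PosSemidef.det_rpow_inv_card_le_trace_div_card {ι : Type*} [Fintype ι]
    [DecidableEq ι] [Nonempty ι] {A : Matrix ι ι ℝ} (hA : A.PosSemidef) :
    A.det ^ (Fintype.card ι : ℝ)⁻¹ ≤ A.trace / Fintype.card ι := by
  have h := Real.geom_mean_le_arith_mean Finset.univ (fun _ => 1) hA.isHermitian.eigenvalues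
    (fun _ _ => zero_le_one) (by simpa using Fintype.card_pos) (fun i _ => hA.eigenvalues_nonneg i)
  simpa [hA.isHermitian.det_eq_prod_eigenvalues, hA.isHermitian.trace_eq_sum_eigenvalues] using h

theorem Matrix.inner_toEuclideanLin_self_eq_trace {ι : Type*} [Fintype ι] [DecidableEq ι]
    (X : Matrix ι ι ℝ) (v : EuclideanSpace ℝ ι) :
    ⟪toEuclideanLin X v, v⟫ = (X * vecMulVec v v).trace := by
  rw [mul_vecMulVec, trace_vecMulVec, EuclideanSpace.inner_eq_star_dotProduct,
    toLpLin_apply, star_trivial, dotProduct_comm]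

theorem sum_mul_inner_sub_sub_of_sum_smul_eq_zero {E ι : Type*} [NormedAddCommGroup E]
    [InnerProductSpace ℝ E] (s : Finset ι) (T : E →ₗ[ℝ] E) (u : ι → E) (lam : ι → ℝ) (c : E)
    (hcen : ∑ i ∈ s, lam i • u i = 0) :
    ∑ i ∈ s, lam i * ⟪T (u i - c), u i - c⟫
      = ∑ i ∈ s, lam i * ⟪T (u i), u i⟫ + (∑ i ∈ s, lam i) * ⟪T c, c⟫ := by
  have hleft : ∑ i ∈ s, lam i * ⟪T (u i), c⟫ = 0 := by
    simp_rw [← real_inner_smul_left, ← map_smul, ← sum_inner, ← map_sum, hcen, map_zero,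
      inner_zero_left]
  have hright : ∑ i ∈ s, lam i * ⟪T c, u i⟫ = 0 := by
    simp_rw [← real_inner_smul_right, ← inner_sum, hcen, inner_zero_right]
  simp only [map_sub, inner_sub_left, inner_sub_right, mul_sub, Finset.sum_sub_distrib,
    hleft, hright, Finset.sum_mul]
  ring

section Frame

variable {ι κ : Type*} [Fintype ι] [DecidableEq ι] [Fintype κ] {u : κ → EuclideanSpace ℝ ι}
  {lam : κ → ℝ}

theorem sum_mul_inner_toEuclideanLin_eq_trace
    (hsum : ∑ i, lam i • vecMulVec (u i) (u i) = 1) (X : Matrix ι ι ℝ) :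
    ∑ i, lam i * ⟪toEuclideanLin X (u i), u i⟫ = X.trace := by
  calc _ = (X * ∑ i, lam i • vecMulVec (u i) (u i)).trace := by
        simp only [inner_toEuclideanLin_self_eq_trace, Matrix.mul_sum, Matrix.mul_smul, trace_sum,
          trace_smul, smul_eq_mul]
    _ = X.trace := by rw [hsum, Matrix.mul_one]

theorem sum_eq_card_of_sum_smul_vecMulVec_eq_one (hu : ∀ i, ‖u i‖ = 1)
    (hsum : ∑ i, lam i • vecMulVec (u i) (u i) = 1) :
    ∑ i, lam i = Fintype.card ι := by
  simpa [real_inner_self_eq_norm_sq, hu] using sum_mul_inner_toEuclideanLin_eq_trace hsum 1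

end Frame

theorem det_rpow_add_inner_le_one_general
    (n k : ℕ) (u : Fin k → EuclideanSpace ℝ (Fin n)) (lam : Fin k → ℝ)
    (hlam : ∀ i, 0 < lam i) (hu : ∀ i, ‖u i‖ = 1)
    (hsum : ∑ i, lam i • Matrix.vecMulVec (u i) (u i) = (1 : Matrix (Fin n) (Fin n) ℝ))
    (hcen : ∑ i, lam i • u i = 0)
    (X : Matrix (Fin n) (Fin n) ℝ) (hXpd : X.PosDef)
    (c : EuclideanSpace ℝ (Fin n))
    (hfeas : ∀ i, ⟪Matrix.toEuclideanLin X (u i - c), u i - c⟫ ≤ 1) :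
    X.det ^ ((1 : ℝ) / n) + ⟪Matrix.toEuclideanLin X c, c⟫ ≤ 1 := by
  rcases Nat.eq_zero_or_pos n with rfl | hn
  · simp [Subsingleton.elim c 0]
  have : Nonempty (Fin n) := ⟨⟨0, hn⟩⟩
  have hS : ∑ i, lam i = n := by
    simpa using sum_eq_card_of_sum_smul_vecMulVec_eq_one hu hsum
  have hexpand : ∑ i, lam i * ⟪toEuclideanLin X (u i - c), u i - c⟫
      = X.trace + n * ⟪toEuclideanLin X c, c⟫ := by
    rw [sum_mul_inner_sub_sub_of_sum_smul_eq_zero _ _ _ _ _ hcen,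
      sum_mul_inner_toEuclideanLin_eq_trace hsum, hS]
  have hfeas_sum : ∑ i, lam i * ⟪toEuclideanLin X (u i - c), u i - c⟫ ≤ n :=
    hS ▸ Finset.sum_le_sum fun i _ => mul_le_of_le_one_right (hlam i).le (hfeas i)
  have hamgm : X.det ^ ((1 : ℝ) / n) ≤ X.trace / n := by
    simpa using hXpd.posSemidef.det_rpow_inv_card_le_trace_div_card
  have hnR : (0 : ℝ) < n := by exact_mod_cast hn
  calc X.det ^ ((1 : ℝ) / n) + ⟪toEuclideanLin X c, c⟫
      ≤ (X.trace + n * ⟪toEuclideanLin X c, c⟫) / n := by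
        rw [add_div, mul_div_cancel_left₀ _ hnR.ne']; linarith
    _ ≤ 1 := (div_le_one hnR).mpr (hexpand ▸ hfeas_sum)

/-- Key inequality: if the John conditions hold for unit vectors `u i` with positive weights,
then every ellipsoid `E(X,c)` containing all the `u i` satisfies
`det(X)^(1/n) + ⟨Xc, c⟩ ≤ 1`. -/
theorem det_rpow_add_inner_le_one
    (n k : ℕ) (u : Fin k → EuclideanSpace ℝ (Fin n)) (lam : Fin k → ℝ)
    (hlam : ∀ i, 0 < lam i) (hu : ∀ i, ‖u i‖ = 1)
    (hsum : ∑ i, lam i • Matrix.vecMulVec (u i) (u i) = (1 : Matrix (Fin n) (Fin n) ℝ))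
    (hcen : ∑ i, lam i • u i = 0)
    (X : Matrix (Fin n) (Fin n) ℝ) (hX : X.IsSymm) (hXpd : X.PosDef)
    (c : EuclideanSpace ℝ (Fin n))
    (hfeas : ∀ i, ⟪Matrix.toEuclideanLin X (u i - c), u i - c⟫ ≤ 1) :
    X.det ^ ((1 : ℝ) / n) + ⟪Matrix.toEuclideanLin X c, c⟫ ≤ 1 :=
  det_rpow_add_inner_le_one_general n k u lam hlam hu hsum hcen X hXpd c hfeas
end

section
/- Let u_1,…,u_k be unit vectors in ℝ^n and λ_i > 0 with ∑ λ_i u_i u_i^T = I_n and ∑ λ_i u_i = 0. If a symmetric positive definite matrix X and c ∈ ℝ^n satisfy ⟨X(u_i−c), u_i−c⟩ ≤ 1 for all i and det X = 1 and ⟨Xc,c⟩ = 0, then X = I_n and c = 0. -/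
open scoped RealInnerProductSpace
open Matrix

/-!
Positivity of `X` turns `⟨Xc, c⟩ = 0` into `c = 0`. Tracing `X = X · ∑ λᵢ uᵢuᵢᵀ` gives
`tr X = ∑ λᵢ ⟨Xuᵢ, uᵢ⟩ ≤ ∑ λᵢ = n`, the last equality being the same computation for `X = I`.
The eigenvalues of `X` are then positive reals with product `1` and sum at most `n`; since
`x - 1 - log x ≥ 0` with equality only at `x = 1`, they all equal `1`, so `X = I`.
-/

theorem Real.eq_one_of_prod_eq_one_of_sum_le_card {ι : Type*} {s : Finset ι} {z : ι → ℝ}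
    (hpos : ∀ i ∈ s, 0 < z i) (hprod : ∏ i ∈ s, z i = 1) (hsum : ∑ i ∈ s, z i ≤ s.card) :
    ∀ i ∈ s, z i = 1 := by
  have hgap : ∀ i ∈ s, 0 ≤ z i - 1 - Real.log (z i) := fun i hi => by
    linarith [Real.log_le_sub_one_of_pos (hpos i hi)]
  have hgap_sum : ∑ i ∈ s, (z i - 1 - Real.log (z i)) = 0 := by
    have hlog : ∑ i ∈ s, Real.log (z i) = 0 := by
      rw [← Real.log_prod fun i hi => (hpos i hi).ne', hprod, Real.log_one]
    refine le_antisymm ?_ (Finset.sum_nonneg hgap)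
    simp only [Finset.sum_sub_distrib, hlog, Finset.sum_const, nsmul_eq_mul, mul_one]
    linarith
  intro i hi
  by_contra hne
  have := Real.log_lt_sub_one_of_pos (hpos i hi) hne
  have := (Finset.sum_eq_zero_iff_of_nonneg hgap).mp hgap_sum i hi
  linarith

theorem Matrix.IsHermitian.eq_one_of_eigenvalues_eq_one {𝕜 n : Type*} [RCLike 𝕜] [Fintype n]
    [DecidableEq n] {A : Matrix n n 𝕜} (hA : A.IsHermitian) (h : ∀ i, hA.eigenvalues i = 1) :
    A = 1 := by
  have hdiag : diagonal (RCLike.ofReal ∘ hA.eigenvalues : n → 𝕜) = 1 := by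
    simp [Function.comp_def, h]
  rw [hA.spectral_theorem, hdiag, map_one]

theorem Matrix.PosDef.eq_one_of_det_eq_one_of_trace_le {n : Type*} [Fintype n] [DecidableEq n]
    {A : Matrix n n ℝ} (hA : A.PosDef) (hdet : A.det = 1) (htrace : A.trace ≤ Fintype.card n) :
    A = 1 := by
  refine hA.isHermitian.eq_one_of_eigenvalues_eq_one fun i =>
    Real.eq_one_of_prod_eq_one_of_sum_le_card (fun j _ => hA.eigenvalues_pos j) ?_ ?_ i
      (Finset.mem_univ i)
  · simpa [hA.isHermitian.det_eq_prod_eigenvalues] using hdet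
  · simpa [hA.isHermitian.trace_eq_sum_eigenvalues] using htrace

theorem Matrix.PosDef.eq_zero_of_dotProduct_mulVec_self_eq_zero {n R : Type*} [Fintype n]
    [Ring R] [PartialOrder R] [StarRing R] {A : Matrix n n R} (hA : A.PosDef) {x : n → R}
    (h : star x ⬝ᵥ A *ᵥ x = 0) : x = 0 := by
  by_contra hx
  exact (hA.dotProduct_mulVec_pos hx).ne' h

theorem Matrix.inner_toEuclideanLin_self {n : Type*} [Fintype n] [DecidableEq n]
    (A : Matrix n n ℝ) (x : EuclideanSpace ℝ n) : ⟪toEuclideanLin A x, x⟫ = x.ofLp ⬝ᵥ A *ᵥ x.ofLp := by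
  rw [EuclideanSpace.inner_eq_star_dotProduct, star_trivial]
  rfl

theorem Matrix.trace_eq_sum_of_sum_smul_vecMulVec_eq_one {ι n R : Type*} [Fintype ι] [Fintype n]
    [DecidableEq n] [CommSemiring R] {w : ι → R} {u : ι → n → R}
    (h : ∑ i, w i • vecMulVec (u i) (u i) = 1) (A : Matrix n n R) :
    A.trace = ∑ i, w i * (u i ⬝ᵥ A *ᵥ u i) := by
  conv_lhs => rw [← mul_one A, ← h]
  simp only [Finset.mul_sum, Matrix.mul_smul, trace_sum, trace_smul, mul_vecMulVec,
    trace_vecMulVec, smul_eq_mul, dotProduct_comm (A *ᵥ _)]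

theorem equality_case_unit_ball_general
    (n k : ℕ) (u : Fin k → EuclideanSpace ℝ (Fin n)) (lam : Fin k → ℝ)
    (hlam : ∀ i, 0 < lam i) (hu : ∀ i, ‖u i‖ = 1)
    (hsum : ∑ i, lam i • Matrix.vecMulVec (u i) (u i) = (1 : Matrix (Fin n) (Fin n) ℝ))
    (X : Matrix (Fin n) (Fin n) ℝ) (hXpd : X.PosDef)
    (c : EuclideanSpace ℝ (Fin n))
    (hfeas : ∀ i, ⟪Matrix.toEuclideanLin X (u i - c), u i - c⟫ ≤ 1)
    (hdet : X.det = 1) (hc : ⟪Matrix.toEuclideanLin X c, c⟫ = 0) :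
    X = (1 : Matrix (Fin n) (Fin n) ℝ) ∧ c = 0 := by
  have hc0 : c = 0 := by
    rw [inner_toEuclideanLin_self X c] at hc
    simpa using hXpd.eq_zero_of_dotProduct_mulVec_self_eq_zero (x := c.ofLp) (by simpa using hc)
  subst hc0
  have hlam_sum : ∑ i, lam i = n := by
    have hunit : ∀ i, (u i).ofLp ⬝ᵥ (u i).ofLp = 1 := fun i => by
      have h := real_inner_self_eq_norm_sq (u i)
      rwa [hu i, one_pow, EuclideanSpace.inner_eq_star_dotProduct, star_trivial] at h
    simpa [hunit] using (trace_eq_sum_of_sum_smul_vecMulVec_eq_one hsum 1).symm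
  have htrace : X.trace ≤ Fintype.card (Fin n) := by
    rw [trace_eq_sum_of_sum_smul_vecMulVec_eq_one hsum X, Fintype.card_fin, ← hlam_sum]
    refine Finset.sum_le_sum fun i _ => mul_le_of_le_one_right (hlam i).le ?_
    simpa [inner_toEuclideanLin_self] using hfeas i
  exact ⟨hXpd.eq_one_of_det_eq_one_of_trace_le hdet htrace, rfl⟩

/-- Equality case of the key lemma: under the John conditions, a circumscribing ellipsoid
`E(X,c)` with `det X = 1` and `⟨Xc,c⟩ = 0` must be the unit ball, i.e. `X = I` and `c = 0`. -/
theorem equality_case_unit_ball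
    (n k : ℕ) (u : Fin k → EuclideanSpace ℝ (Fin n)) (lam : Fin k → ℝ)
    (hlam : ∀ i, 0 < lam i) (hu : ∀ i, ‖u i‖ = 1)
    (hsum : ∑ i, lam i • Matrix.vecMulVec (u i) (u i) = (1 : Matrix (Fin n) (Fin n) ℝ))
    (hcen : ∑ i, lam i • u i = 0)
    (X : Matrix (Fin n) (Fin n) ℝ) (hX : X.IsSymm) (hXpd : X.PosDef)
    (c : EuclideanSpace ℝ (Fin n))
    (hfeas : ∀ i, ⟪Matrix.toEuclideanLin X (u i - c), u i - c⟫ ≤ 1)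
    (hdet : X.det = 1) (hc : ⟪Matrix.toEuclideanLin X c, c⟫ = 0) :
    X = (1 : Matrix (Fin n) (Fin n) ℝ) ∧ c = 0 :=
  equality_case_unit_ball_general n k u lam hlam hu hsum X hXpd c hfeas hdet hc
end

section
/- Let u_1,…,u_k be unit vectors in ℝ^n and λ_i > 0 with ∑ λ_i u_i u_i^T = I_n and ∑ λ_i u_i = 0. Let P° = {x : ⟨u_i, x⟩ ≤ 1 for all i}. Then for any symmetric positive definite matrix X and c ∈ ℝ^n with E(X,c) = {x : ⟨X(x−c),x−c⟩ ≤ 1} ⊆ P°, one has det X ≥ 1. -/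
/-!
Write `A = √(X⁻¹)`. Testing `E(X,c) ⊆ P°` at the point of `E(X,c)` extremal in direction `u i`
gives `⟪u i, c⟫ + ‖A (u i)‖ ≤ 1`. Tracing `∑ λᵢ uᵢuᵢᵀ = I` against `A`, using Cauchy–Schwarz and
`∑ λᵢ uᵢ = 0`, yields `tr A ≤ ∑ λᵢ = n`, and AM–GM on the eigenvalues of `A` turns this into
`det X⁻¹ = (det A)² ≤ 1`.
-/

open scoped RealInnerProductSpace MatrixOrder
open Matrix

namespace Matrix

variable {ι : Type*} [Fintype ι] [DecidableEq ι]

def ellipsoid (X : Matrix ι ι ℝ) (c : EuclideanSpace ℝ ι) : Set (EuclideanSpace ℝ ι) :=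
  {x | ⟪toEuclideanLin X (x - c), x - c⟫ ≤ 1}

theorem PosDef.inner_add_sqrt_le_of_ellipsoid_subset {X : Matrix ι ι ℝ} (hX : X.PosDef)
    {c u : EuclideanSpace ℝ ι} {b : ℝ} (h : ellipsoid X c ⊆ {x | ⟪u, x⟫ ≤ b}) :
    ⟪u, c⟫ + √⟪u, toEuclideanLin X⁻¹ u⟫ ≤ b := by
  set v := toEuclideanLin X⁻¹ u
  set q := ⟪u, v⟫
  have hXv : toEuclideanLin X v = u := by
    rw [← LinearMap.comp_apply, ← toLpLin_mul_same, mul_nonsing_inv X hX.det_pos.ne'.isUnit]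
    simp
  have hq : 0 ≤ q := (isPositive_toEuclideanLin_iff.mpr hX.inv.posSemidef).inner_nonneg_right u
  -- for `q = 0` the junk value `(√0)⁻¹ = 0` makes `x = c`, which still works
  set x := c + (√q)⁻¹ • v
  have hx : x - c = (√q)⁻¹ • v := add_sub_cancel_left c _
  have hmem : x ∈ ellipsoid X c := by
    change ⟪toEuclideanLin X (x - c), x - c⟫ ≤ 1
    rw [hx, map_smul, hXv, real_inner_smul_left, real_inner_smul_right, ← mul_assoc, ← sq,
      inv_pow, Real.sq_sqrt hq]
    exact inv_mul_le_one_of_le₀ le_rfl hq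
  have hux := h hmem
  simp only [Set.mem_ofPred_eq, x, inner_add_right, real_inner_smul_right] at hux
  rwa [inv_mul_eq_div, Real.div_sqrt] at hux

theorem norm_toEuclideanLin_eq_sqrt_inner {A : Matrix ι ι ℝ} (hA : A.IsHermitian)
    (u : EuclideanSpace ℝ ι) :
    ‖toEuclideanLin A u‖ = √⟪u, toEuclideanLin (A * A) u⟫ := by
  rw [toLpLin_mul_same, LinearMap.comp_apply, ← isSymmetric_toEuclideanLin_iff.mpr hA,
    real_inner_self_eq_norm_sq, Real.sqrt_sq (norm_nonneg _)]

theorem trace_eq_sum_inner_of_sum_vecMulVec_eq_one {κ : Type*} [Fintype κ]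
    {u : κ → EuclideanSpace ℝ ι} {lam : κ → ℝ}
    (hsum : ∑ i, lam i • vecMulVec (u i) (u i) = 1) (A : Matrix ι ι ℝ) :
    A.trace = ∑ i, lam i * ⟪u i, toEuclideanLin A (u i)⟫ := by
  conv_lhs => rw [← mul_one A, ← hsum]
  simp [Finset.mul_sum, trace_sum, mul_vecMulVec, EuclideanSpace.inner_eq_star_dotProduct]

theorem sum_eq_card_of_sum_vecMulVec_eq_one {κ : Type*} [Fintype κ]
    {u : κ → EuclideanSpace ℝ ι} {lam : κ → ℝ} (hu : ∀ i, ‖u i‖ = 1)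
    (hsum : ∑ i, lam i • vecMulVec (u i) (u i) = 1) :
    ∑ i, lam i = Fintype.card ι := by
  simpa [real_inner_self_eq_norm_sq, hu] using
    (trace_eq_sum_inner_of_sum_vecMulVec_eq_one hsum 1).symm

theorem PosSemidef.det_le_trace_div_card_pow {A : Matrix ι ι ℝ} (hA : A.PosSemidef) :
    A.det ≤ (A.trace / Fintype.card ι) ^ Fintype.card ι := by
  rcases isEmpty_or_nonempty ι with hι | hι
  · simp
  have hcard : (0 : ℝ) < Fintype.card ι := by exact_mod_cast Fintype.card_pos
  have hev := hA.eigenvalues_nonneg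
  have hprod : 0 ≤ ∏ j, hA.isHermitian.eigenvalues j := Finset.prod_nonneg fun j _ ↦ hev j
  have amgm := Real.geom_mean_le_arith_mean Finset.univ (fun _ ↦ 1) hA.isHermitian.eigenvalues
    (fun _ _ ↦ zero_le_one) (by simpa using hcard) (fun j _ ↦ hev j)
  simp only [Real.rpow_one, Finset.sum_const, Finset.card_univ, nsmul_eq_mul, mul_one,
    one_mul] at amgm
  rw [hA.isHermitian.det_eq_prod_eigenvalues, hA.isHermitian.trace_eq_sum_eigenvalues]
  calc ∏ j, hA.isHermitian.eigenvalues j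
      = ((∏ j, hA.isHermitian.eigenvalues j) ^ (Fintype.card ι : ℝ)⁻¹) ^ Fintype.card ι :=
        (Real.rpow_inv_natCast_pow hprod Fintype.card_ne_zero).symm
    _ ≤ _ := by gcongr; simpa using amgm

theorem PosDef.one_le_det_of_trace_sqrt_inv_le_card {X : Matrix ι ι ℝ} (hX : X.PosDef)
    (htrace : (CFC.sqrt X⁻¹).trace ≤ Fintype.card ι) : 1 ≤ X.det := by
  have hA : (CFC.sqrt X⁻¹).PosSemidef := (CFC.sqrt_nonneg X⁻¹).posSemidef
  have hdetA : (CFC.sqrt X⁻¹).det ≤ 1 :=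
    hA.det_le_trace_div_card_pow.trans <|
      pow_le_one₀ (div_nonneg hA.trace_nonneg (Nat.cast_nonneg _)) (div_le_one_of_le₀ htrace
        (Nat.cast_nonneg _))
  have hdet_inv : X⁻¹.det ≤ 1 := by
    rw [← CFC.sqrt_mul_sqrt_self X⁻¹ hX.inv.posSemidef.nonneg, det_mul]
    exact mul_le_one₀ hdetA hA.det_nonneg hdetA
  rwa [det_nonsing_inv, Ring.inverse_eq_inv, inv_le_one₀ hX.det_pos] at hdet_inv

end Matrix

theorem inscribed_ellipsoid_det_ge_one_general
    (n k : ℕ) (u : Fin k → EuclideanSpace ℝ (Fin n)) (lam : Fin k → ℝ)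
    (hlam : ∀ i, 0 < lam i) (hu : ∀ i, ‖u i‖ = 1)
    (hsum : ∑ i, lam i • Matrix.vecMulVec (u i) (u i) = (1 : Matrix (Fin n) (Fin n) ℝ))
    (hcen : ∑ i, lam i • u i = 0)
    (X : Matrix (Fin n) (Fin n) ℝ) (hXpd : X.PosDef)
    (c : EuclideanSpace ℝ (Fin n))
    (hsub : {x : EuclideanSpace ℝ (Fin n) | ⟪Matrix.toEuclideanLin X (x - c), x - c⟫ ≤ 1}
      ⊆ {x : EuclideanSpace ℝ (Fin n) | ∀ i, ⟪u i, x⟫ ≤ 1}) :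
    1 ≤ X.det := by
  set A := CFC.sqrt X⁻¹
  have hAA : A * A = X⁻¹ := CFC.sqrt_mul_sqrt_self X⁻¹ hXpd.inv.posSemidef.nonneg
  have hsupport (i) : ⟪u i, c⟫ + ‖toEuclideanLin A (u i)‖ ≤ 1 := by
    rw [norm_toEuclideanLin_eq_sqrt_inner (CFC.sqrt_nonneg X⁻¹).posSemidef.isHermitian, hAA]
    exact hXpd.inner_add_sqrt_le_of_ellipsoid_subset fun x hx ↦ hsub hx i
  have hcauchy (i) : ⟪u i, toEuclideanLin A (u i)⟫ ≤ ‖toEuclideanLin A (u i)‖ := by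
    simpa [hu i] using real_inner_le_norm (u i) (toEuclideanLin A (u i))
  refine hXpd.one_le_det_of_trace_sqrt_inv_le_card ?_
  calc A.trace = ∑ i, lam i * ⟪u i, toEuclideanLin A (u i)⟫ :=
        trace_eq_sum_inner_of_sum_vecMulVec_eq_one hsum A
    _ ≤ ∑ i, lam i * (1 - ⟪u i, c⟫) := by
        gcongr with i
        · exact (hlam i).le
        · linarith [hsupport i, hcauchy i]
    _ = ∑ i, lam i - ⟪∑ i, lam i • u i, c⟫ := by
        simp [mul_sub, sum_inner, real_inner_smul_left]
    _ = Fintype.card (Fin n) := by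
        rw [sum_eq_card_of_sum_vecMulVec_eq_one hu hsum, hcen, inner_zero_left, sub_zero]

/-- Under the John conditions, any ellipsoid `E(X,c)` inscribed in the polar
`P° = {x : ⟨u i, x⟩ ≤ 1 ∀ i}` satisfies `det X ≥ 1`. -/
theorem inscribed_ellipsoid_det_ge_one
    (n k : ℕ) (u : Fin k → EuclideanSpace ℝ (Fin n)) (lam : Fin k → ℝ)
    (hlam : ∀ i, 0 < lam i) (hu : ∀ i, ‖u i‖ = 1)
    (hsum : ∑ i, lam i • Matrix.vecMulVec (u i) (u i) = (1 : Matrix (Fin n) (Fin n) ℝ))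
    (hcen : ∑ i, lam i • u i = 0)
    (X : Matrix (Fin n) (Fin n) ℝ) (hX : X.IsSymm) (hXpd : X.PosDef)
    (c : EuclideanSpace ℝ (Fin n))
    (hsub : {x : EuclideanSpace ℝ (Fin n) | ⟪Matrix.toEuclideanLin X (x - c), x - c⟫ ≤ 1}
      ⊆ {x : EuclideanSpace ℝ (Fin n) | ∀ i, ⟪u i, x⟫ ≤ 1}) :
    1 ≤ X.det :=
  inscribed_ellipsoid_det_ge_one_general n k u lam hlam hu hsum hcen X hXpd c hsub
end

section
/- Let K be a convex body in ℝ^n whose minimum volume circumscribed ellipsoid is the unit ball, with contact points u_1,…,u_k (unit vectors) and multipliers λ_i > 0 satisfying ∑ λ_i u_i u_i^T = I_n and ∑ λ_i u_i = 0. Then for every unit vector d, (max_i ⟨d, u_i⟩)·(max_i ⟨−d, u_i⟩) ≥ 1/n. -/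
open scoped RealInnerProductSpace
open Matrix

/-- If the minimum volume circumscribed ellipsoid of a convex body `K` is the unit ball,
with contact points `u i` and multipliers `λ i` satisfying the John conditions, then for
every unit vector `d`, `(max_i ⟨d, u i⟩) * (max_i ⟨-d, u i⟩) ≥ 1/n`. -/
theorem contact_points_product_bound
    (n k : ℕ) (hn : 0 < n) (hk : 0 < k)
    (K : Set (EuclideanSpace ℝ (Fin n)))
    (hKconv : Convex ℝ K) (hKcomp : IsCompact K) (hKint : (interior K).Nonempty)
    (hKball : K ⊆ Metric.closedBall 0 1)
    (hmin : ∀ (X : Matrix (Fin n) (Fin n) ℝ) (c : EuclideanSpace ℝ (Fin n)), X.PosDef →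
      K ⊆ {x | ⟪Matrix.toEuclideanLin X (x - c), x - c⟫ ≤ 1} → X.det ≤ 1)
    (u : Fin k → EuclideanSpace ℝ (Fin n)) (lam : Fin k → ℝ)
    (hcontact : ∀ i, u i ∈ K ∧ ‖u i‖ = 1)
    (hlam : ∀ i, 0 < lam i)
    (hsum : ∑ i, lam i • Matrix.vecMulVec (u i) (u i) = (1 : Matrix (Fin n) (Fin n) ℝ))
    (hcen : ∑ i, lam i • u i = 0)
    (d : EuclideanSpace ℝ (Fin n)) (hd : ‖d‖ = 1) :
    (1 : ℝ) / n ≤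
      (Finset.univ.sup' ⟨⟨0, hk⟩, Finset.mem_univ _⟩ fun i => ⟪d, u i⟫)
        * (Finset.univ.sup' ⟨⟨0, hk⟩, Finset.mem_univ _⟩ fun i => ⟪-d, u i⟫) := by
  classical
  set a : Fin k → ℝ := fun i => ⟪d, u i⟫ with ha
  have hip : ∀ (x y : EuclideanSpace ℝ (Fin n)), ⟪x, y⟫ = ∑ j, x j * y j := by
    intro x y
    simp [PiLp.inner_apply, RCLike.inner_apply, mul_comm]
  have hE : ∀ j l, ∑ i, lam i * (u i j * u i l) = if j = l then (1 : ℝ) else 0 := by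
    intro j l
    have h := congrFun (congrFun hsum j) l
    simpa [Matrix.sum_apply, Matrix.vecMulVec_apply, Matrix.one_apply, mul_assoc] using h
  have hnormu : ∀ i, ∑ j, u i j * u i j = 1 := by
    intro i
    have h1 : ⟪u i, u i⟫ = 1 := by
      rw [real_inner_self_eq_norm_sq, (hcontact i).2]; norm_num
    rw [hip] at h1; exact h1
  have hsumlam : ∑ i, lam i = (n : ℝ) := by
    calc ∑ i, lam i = ∑ i, ∑ j, lam i * (u i j * u i j) := by
          refine Finset.sum_congr rfl fun i _ => ?_
          rw [← Finset.mul_sum, hnormu i, mul_one]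
      _ = ∑ j, ∑ i, lam i * (u i j * u i j) := Finset.sum_comm
      _ = ∑ j : Fin n, (1 : ℝ) := by
          refine Finset.sum_congr rfl fun j _ => ?_
          rw [hE j j]; simp
      _ = (n : ℝ) := by simp
  have hcen0 : ∑ i, lam i * a i = 0 := by
    have : ⟪d, ∑ i, lam i • u i⟫ = ∑ i, lam i * a i := by
      rw [inner_sum]
      exact Finset.sum_congr rfl fun i _ => real_inner_smul_right d (u i) (lam i)
    rw [hcen] at this
    simpa using this.symm
  have hd2 : ∑ j, d j * d j = 1 := by
    have h1 : ⟪d, d⟫ = 1 := by rw [real_inner_self_eq_norm_sq, hd]; norm_num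
    rw [hip] at h1; exact h1
  have hv : ∀ j, ∑ i, lam i * a i * u i j = d j := by
    intro j
    calc ∑ i, lam i * a i * u i j
        = ∑ i, ∑ l, d l * (lam i * (u i j * u i l)) := by
          refine Finset.sum_congr rfl fun i _ => ?_
          have hai : a i = ∑ l, d l * u i l := by simp only [ha]; rw [hip]
          rw [hai, Finset.mul_sum, Finset.sum_mul]
          exact Finset.sum_congr rfl fun l _ => by ring
      _ = ∑ l, ∑ i, d l * (lam i * (u i j * u i l)) := Finset.sum_comm
      _ = ∑ l, d l * (if j = l then (1 : ℝ) else 0) := by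
          refine Finset.sum_congr rfl fun l _ => ?_
          rw [← Finset.mul_sum, hE j l]
      _ = d j := by simp [eq_comm]
  have hA2 : ∑ i, lam i * (a i * a i) = 1 := by
    calc ∑ i, lam i * (a i * a i)
        = ∑ i, ∑ j, d j * (lam i * a i * u i j) := by
          refine Finset.sum_congr rfl fun i _ => ?_
          have hai : (∑ j, d j * u i j) = a i := by simp only [ha]; rw [hip]
          calc lam i * (a i * a i) = (lam i * a i) * ∑ j, d j * u i j := by rw [hai]; ring
            _ = ∑ j, d j * (lam i * a i * u i j) := by
                rw [Finset.mul_sum]; exact Finset.sum_congr rfl fun j _ => by ring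
      _ = ∑ j, ∑ i, d j * (lam i * a i * u i j) := Finset.sum_comm
      _ = ∑ j, d j * d j := by
          refine Finset.sum_congr rfl fun j _ => ?_
          rw [← Finset.mul_sum, hv j]
      _ = 1 := hd2
  set s : ℝ := Finset.univ.sup' ⟨⟨0, hk⟩, Finset.mem_univ _⟩ (fun i => ⟪d, u i⟫) with hs
  set t : ℝ := Finset.univ.sup' ⟨⟨0, hk⟩, Finset.mem_univ _⟩ (fun i => ⟪-d, u i⟫) with ht
  have hsa : ∀ i, a i ≤ s := fun i => Finset.le_sup' _ (Finset.mem_univ i)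
  have hta : ∀ i, -(a i) ≤ t := by
    intro i
    have := Finset.le_sup' (fun i => ⟪-d, u i⟫) (Finset.mem_univ i)
    rw [← ht] at this
    simpa [ha, inner_neg_left] using this
  have key : 0 ≤ ∑ i, lam i * ((s - a i) * (t + a i)) := by
    refine Finset.sum_nonneg fun i _ => ?_
    have h1 : 0 ≤ s - a i := sub_nonneg.2 (hsa i)
    have h2 : 0 ≤ t + a i := by have := hta i; linarith
    exact mul_nonneg (hlam i).le (mul_nonneg h1 h2)
  have expand : ∑ i, lam i * ((s - a i) * (t + a i))
      = s * t * (∑ i, lam i) + (s - t) * (∑ i, lam i * a i) - ∑ i, lam i * (a i * a i) := by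
    have h : ∀ i : Fin k, lam i * ((s - a i) * (t + a i))
        = s * t * lam i + (s - t) * (lam i * a i) - lam i * (a i * a i) := fun i => by ring
    simp_rw [h]
    rw [Finset.sum_sub_distrib, Finset.sum_add_distrib, ← Finset.mul_sum, ← Finset.mul_sum]
  rw [expand, hsumlam, hcen0, hA2] at key
  have hn' : (0 : ℝ) < n := by exact_mod_cast hn
  rw [div_le_iff₀ hn']
  nlinarith [key]
end

section
/- Let K be a convex body in ℝ^n whose minimum volume circumscribed ellipsoid is the unit ball, with contact points u_1,…,u_k and multipliers λ_i > 0 satisfying ∑ λ_i u_i u_i^T = I_n and ∑ λ_i u_i = 0. Then for every unit vector d, max_i ⟨d, u_i⟩ + max_i ⟨−d, u_i⟩ ≥ 2/√n. -/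
/-!
Put `c i = ⟪d, u i⟫`, `s = max c` and `t = max (-c)`. The John conditions give `∑ λ i = n`
(take traces), `∑ λ i c i = 0` and `∑ λ i (c i)² = ‖d‖² = 1`. Every term
`λ i (s - c i) (t + c i)` is nonnegative, and expanding their sum yields `n s t - 1 ≥ 0`;
finally `(s + t)² ≥ 4 s t ≥ 4 / n`.
-/

open scoped RealInnerProductSpace
open Matrix

variable {ι m : Type*} [Fintype ι] [Fintype m] [DecidableEq m]

theorem sum_mul_inner_mul_inner_of_sum_smul_vecMulVec_eq_one
    {lam : ι → ℝ} {u : ι → EuclideanSpace ℝ m}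
    (h : ∑ i, lam i • vecMulVec (u i) (u i) = 1) (x y : EuclideanSpace ℝ m) :
    ∑ i, lam i * (⟪x, u i⟫ * ⟪y, u i⟫) = ⟪x, y⟫ := by
  have := congrArg (fun M => x ⬝ᵥ (M *ᵥ y)) h
  simp only [sum_mulVec, smul_mulVec, vecMulVec_mulVec, dotProduct_sum, one_mulVec] at this
  simp only [EuclideanSpace.inner_eq_star_dotProduct, star_trivial]
  rw [dotProduct_comm, ← this]
  refine Finset.sum_congr rfl fun i _ => ?_
  simp only [dotProduct_smul, dotProduct_comm, op_smul_eq_mul, smul_eq_mul]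

theorem sum_mul_norm_sq_of_sum_smul_vecMulVec_eq_one
    {lam : ι → ℝ} {u : ι → EuclideanSpace ℝ m}
    (h : ∑ i, lam i • vecMulVec (u i) (u i) = 1) :
    ∑ i, lam i * ‖u i‖ ^ 2 = Fintype.card m := by
  have := congrArg trace h
  simp only [trace_sum, trace_smul, trace_vecMulVec, trace_one] at this
  rw [← this]
  refine Finset.sum_congr rfl fun i _ => ?_
  rw [← real_inner_self_eq_norm_sq, EuclideanSpace.inner_eq_star_dotProduct, star_trivial,
    smul_eq_mul]

theorem one_le_sum_mul_mul_of_le_of_neg_le {lam c : ι → ℝ} {s t : ℝ}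
    (hlam : ∀ i, 0 ≤ lam i) (hc0 : ∑ i, lam i * c i = 0) (hc2 : ∑ i, lam i * c i ^ 2 = 1)
    (hs : ∀ i, c i ≤ s) (ht : ∀ i, -c i ≤ t) :
    1 ≤ (∑ i, lam i) * (s * t) := by
  have key : 0 ≤ ∑ i, lam i * ((s - c i) * (t + c i)) :=
    Finset.sum_nonneg fun i _ =>
      mul_nonneg (hlam i) (mul_nonneg (sub_nonneg.2 (hs i)) (by linarith [ht i]))
  have expand : ∑ i, lam i * ((s - c i) * (t + c i))
      = (∑ i, lam i) * (s * t) + (s - t) * ∑ i, lam i * c i - ∑ i, lam i * c i ^ 2 := by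
    simp only [Finset.sum_mul, Finset.mul_sum, ← Finset.sum_add_distrib,
      ← Finset.sum_sub_distrib]
    exact Finset.sum_congr rfl fun i _ => by ring
  rw [expand, hc0, hc2] at key
  linarith

theorem two_div_sqrt_le_add_of_one_le_mul_mul {N s t : ℝ} (hst : 0 ≤ s + t)
    (h : 1 ≤ N * (s * t)) : 2 / √N ≤ s + t := by
  rcases le_or_gt N 0 with hN | hN
  · rw [Real.sqrt_eq_zero'.2 hN, div_zero]
    exact hst
  rw [div_le_iff₀ (Real.sqrt_pos.2 hN)]
  have hr := Real.sq_sqrt hN.le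
  have h4 : 4 ≤ ((s + t) * √N) ^ 2 := by
    rw [mul_pow, hr]
    nlinarith [mul_nonneg (sq_nonneg (s - t)) hN.le]
  nlinarith [mul_nonneg hst (Real.sqrt_nonneg N)]

theorem contact_points_breadth_bound_general
    (n k : ℕ) (hk : 0 < k)
    (K : Set (EuclideanSpace ℝ (Fin n)))
    (u : Fin k → EuclideanSpace ℝ (Fin n)) (lam : Fin k → ℝ)
    (hcontact : ∀ i, u i ∈ K ∧ ‖u i‖ = 1)
    (hlam : ∀ i, 0 < lam i)
    (hsum : ∑ i, lam i • Matrix.vecMulVec (u i) (u i) = (1 : Matrix (Fin n) (Fin n) ℝ))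
    (hcen : ∑ i, lam i • u i = 0)
    (d : EuclideanSpace ℝ (Fin n)) (hd : ‖d‖ = 1) :
    2 / Real.sqrt n ≤
      (Finset.univ.sup' ⟨⟨0, hk⟩, Finset.mem_univ _⟩ fun i => ⟪d, u i⟫)
        + (Finset.univ.sup' ⟨⟨0, hk⟩, Finset.mem_univ _⟩ fun i => ⟪-d, u i⟫) := by
  set s := Finset.univ.sup' ⟨⟨0, hk⟩, Finset.mem_univ _⟩ fun i => ⟪d, u i⟫
  set t := Finset.univ.sup' ⟨⟨0, hk⟩, Finset.mem_univ _⟩ fun i => ⟪-d, u i⟫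
  have hs : ∀ i, ⟪d, u i⟫ ≤ s := fun i =>
    Finset.le_sup' (fun i => ⟪d, u i⟫) (Finset.mem_univ i)
  have ht : ∀ i, -⟪d, u i⟫ ≤ t := fun i => by
    rw [← inner_neg_left]
    exact Finset.le_sup' (fun i => ⟪-d, u i⟫) (Finset.mem_univ i)
  have htrace : ∑ i, lam i = n := by
    simpa [(hcontact _).2] using sum_mul_norm_sq_of_sum_smul_vecMulVec_eq_one hsum
  have hcentre : ∑ i, lam i * ⟪d, u i⟫ = 0 := by
    simp only [← real_inner_smul_right, ← inner_sum, hcen, inner_zero_right]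
  have hvar : ∑ i, lam i * ⟪d, u i⟫ ^ 2 = 1 := by
    simpa [sq, hd] using sum_mul_inner_mul_inner_of_sum_smul_vecMulVec_eq_one hsum d d
  refine two_div_sqrt_le_add_of_one_le_mul_mul (by linarith [hs ⟨0, hk⟩, ht ⟨0, hk⟩]) ?_
  rw [← htrace]
  exact one_le_sum_mul_mul_of_le_of_neg_le (fun i => (hlam i).le) hcentre hvar hs ht

/-- Breadth bound: if the minimum volume circumscribed ellipsoid of a convex body `K` is the
unit ball, with contact points `u i` and multipliers `λ i` satisfying the John conditions,
then for every unit vector `d`, `max_i ⟨d, u i⟩ + max_i ⟨-d, u i⟩ ≥ 2/√n`. -/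
theorem contact_points_breadth_bound
    (n k : ℕ) (hn : 0 < n) (hk : 0 < k)
    (K : Set (EuclideanSpace ℝ (Fin n)))
    (hKconv : Convex ℝ K) (hKcomp : IsCompact K) (hKint : (interior K).Nonempty)
    (hKball : K ⊆ Metric.closedBall 0 1)
    (hmin : ∀ (X : Matrix (Fin n) (Fin n) ℝ) (c : EuclideanSpace ℝ (Fin n)), X.PosDef →
      K ⊆ {x | ⟪Matrix.toEuclideanLin X (x - c), x - c⟫ ≤ 1} → X.det ≤ 1)
    (u : Fin k → EuclideanSpace ℝ (Fin n)) (lam : Fin k → ℝ)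
    (hcontact : ∀ i, u i ∈ K ∧ ‖u i‖ = 1)
    (hlam : ∀ i, 0 < lam i)
    (hsum : ∑ i, lam i • Matrix.vecMulVec (u i) (u i) = (1 : Matrix (Fin n) (Fin n) ℝ))
    (hcen : ∑ i, lam i • u i = 0)
    (d : EuclideanSpace ℝ (Fin n)) (hd : ‖d‖ = 1) :
    2 / Real.sqrt n ≤
      (Finset.univ.sup' ⟨⟨0, hk⟩, Finset.mem_univ _⟩ fun i => ⟪d, u i⟫)
        + (Finset.univ.sup' ⟨⟨0, hk⟩, Finset.mem_univ _⟩ fun i => ⟪-d, u i⟫) :=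
  contact_points_breadth_bound_general n k hk K u lam hcontact hlam hsum hcen d hd
end

section
/- Let u_1,…,u_k be unit vectors in ℝ^n with λ_i > 0, ∑ λ_i u_i u_i^T = I_n, and ∑ λ_i u_i = 0. If x ∈ ℝ^n satisfies ⟨x, u_i⟩ ≤ 1 for all i, then ‖x‖ ≤ n. -/
/-!
Each term `λᵢ (1 - ⟪x, uᵢ⟫) (‖x‖ + ⟪x, uᵢ⟫)` is nonnegative, by the hypothesis on `x` and
Cauchy–Schwarz. Summing, the centering condition kills the linear terms, the frame identity
`∑ λᵢ ⟪x, uᵢ⟫² = ‖x‖²` handles the quadratic one, and taking traces gives `∑ λᵢ = n`; hence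
`0 ≤ n ‖x‖ - ‖x‖²`.
-/

open scoped RealInnerProductSpace
open Matrix

theorem norm_le_sum_of_inner_le_one {E κ : Type*} [NormedAddCommGroup E] [InnerProductSpace ℝ E]
    [Fintype κ] {u : κ → E} {lam : κ → ℝ} (hlam : ∀ i, 0 ≤ lam i) (hu : ∀ i, ‖u i‖ ≤ 1)
    (hcen : ∑ i, lam i • u i = 0) {x : E} (hquad : ∑ i, lam i * ⟪x, u i⟫ ^ 2 = ‖x‖ ^ 2)
    (hx : ∀ i, ⟪x, u i⟫ ≤ 1) :
    ‖x‖ ≤ ∑ i, lam i := by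
  have hlin : ∑ i, lam i * ⟪x, u i⟫ = 0 := by
    simpa [inner_sum, real_inner_smul_right] using congrArg (⟪x, ·⟫) hcen
  have hcs : ∀ i, -‖x‖ ≤ ⟪x, u i⟫ := fun i =>
    neg_le_of_abs_le ((abs_real_inner_le_norm x (u i)).trans
      (mul_le_of_le_one_right (norm_nonneg x) (hu i)))
  have hterm : ∀ i, 0 ≤ lam i * ((1 - ⟪x, u i⟫) * (‖x‖ + ⟪x, u i⟫)) := fun i =>
    mul_nonneg (hlam i) (mul_nonneg (by linarith [hx i]) (by linarith [hcs i]))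
  have hexpand : ∑ i, lam i * ((1 - ⟪x, u i⟫) * (‖x‖ + ⟪x, u i⟫))
      = ‖x‖ * ∑ i, lam i + (1 - ‖x‖) * ∑ i, lam i * ⟪x, u i⟫ - ∑ i, lam i * ⟪x, u i⟫ ^ 2 := by
    simp only [Finset.mul_sum, ← Finset.sum_add_distrib, ← Finset.sum_sub_distrib]
    exact Finset.sum_congr rfl fun i _ => by ring
  have hsq : ‖x‖ ^ 2 ≤ ‖x‖ * ∑ i, lam i := by
    have := Finset.sum_nonneg fun i (_ : i ∈ Finset.univ) => hterm i
    rw [hexpand, hlin, hquad] at this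
    linarith
  nlinarith [norm_nonneg x, Finset.sum_nonneg fun i (_ : i ∈ Finset.univ) => hlam i]

namespace EuclideanSpace

variable {ι κ : Type*} [Fintype ι]

theorem real_inner_eq_dotProduct (x y : EuclideanSpace ℝ ι) : ⟪x, y⟫ = (x : ι → ℝ) ⬝ᵥ y := by
  rw [inner_eq_star_dotProduct, star_trivial, dotProduct_comm]

variable [DecidableEq ι] [Fintype κ] {u : κ → EuclideanSpace ℝ ι} {lam : κ → ℝ}

theorem sum_eq_card_of_sum_smul_vecMulVec_eq_one (hu : ∀ i, ‖u i‖ = 1)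
    (hsum : ∑ i, lam i • vecMulVec (u i) (u i) = 1) :
    ∑ i, lam i = Fintype.card ι := by
  have hunit : ∀ i, (u i : ι → ℝ) ⬝ᵥ u i = 1 := fun i => by
    rw [← real_inner_eq_dotProduct, real_inner_self_eq_norm_sq, hu i, one_pow]
  simpa [trace_sum, trace_smul, hunit] using congrArg trace hsum

theorem sum_mul_inner_sq_eq_norm_sq (hsum : ∑ i, lam i • vecMulVec (u i) (u i) = 1)
    (x : EuclideanSpace ℝ ι) :
    ∑ i, lam i * ⟪x, u i⟫ ^ 2 = ‖x‖ ^ 2 := by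
  have h := congrArg (fun M => (x : ι → ℝ) ⬝ᵥ M *ᵥ x) hsum
  simp only [sum_mulVec, smul_mulVec, vecMulVec_mulVec, dotProduct_sum, one_mulVec] at h
  simp only [← real_inner_self_eq_norm_sq, real_inner_eq_dotProduct, ← h]
  refine Finset.sum_congr rfl fun i _ => ?_
  rw [op_smul_eq_smul, dotProduct_smul, dotProduct_smul, dotProduct_comm (u i : ι → ℝ),
    smul_eq_mul, smul_eq_mul, sq]

end EuclideanSpace

/-- Core inequality of Fritz John's theorem: under the John conditions, any `x` in the polar
of the convex hull of the contact points satisfies `‖x‖ ≤ n`. -/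
theorem polar_subset_ball_radius_n
    (n k : ℕ) (u : Fin k → EuclideanSpace ℝ (Fin n)) (lam : Fin k → ℝ)
    (hlam : ∀ i, 0 < lam i) (hu : ∀ i, ‖u i‖ = 1)
    (hsum : ∑ i, lam i • Matrix.vecMulVec (u i) (u i) = (1 : Matrix (Fin n) (Fin n) ℝ))
    (hcen : ∑ i, lam i • u i = 0)
    (x : EuclideanSpace ℝ (Fin n)) (hx : ∀ i, ⟪x, u i⟫ ≤ 1) :
    ‖x‖ ≤ n := by
  have htrace : ∑ i, lam i = n := by
    simpa using EuclideanSpace.sum_eq_card_of_sum_smul_vecMulVec_eq_one hu hsum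
  rw [← htrace]
  exact norm_le_sum_of_inner_le_one (fun i => (hlam i).le) (fun i => (hu i).le) hcen
    (EuclideanSpace.sum_mul_inner_sq_eq_norm_sq hsum x) hx
end

section
/- Let q : ℝ → ℝ be a quadratic polynomial that is nonnegative on an interval [a,b] with a < b. Then there exist real numbers α, β and γ ≥ 0 such that q(u) = (αu + β)² + γ(u−a)(b−u) for all u. -/
/-!
Let `s = √q(a)` and `t = √q(b)`. The line `ℓ` with `ℓ(a) = -s` and `ℓ(b) = t` makes
`q - ℓ²` vanish at `a` and `b`, so `q - ℓ² = γ (u - a)(b - u)` where `γ = A² - p` and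
`A = (s + t)/(b - a)` is the slope of `ℓ`. It remains to see `p (b - a)² ≤ (s + t)²`.
For `p > 0` write `q(u) = p (u - v)² + c`. If `c ≥ 0` then `√q(u) ≥ √p |u - v|`, and the
triangle inequality gives `s + t ≥ √p (b - a)`. If `c < 0` then nonnegativity forces the vertex
`v` outside `[a, b]`, and then `q` grows by at least `p (b - a)²` from one endpoint to the other.
-/

open Real Set

theorem mul_sq_le_sq_sqrt_add_sqrt_of_vertex {f : ℝ → ℝ} {p v c a b : ℝ} (hp : 0 ≤ p)
    (hf : ∀ u, f u = p * (u - v) ^ 2 + c) (hab : a ≤ b) (hnonneg : ∀ u ∈ Icc a b, 0 ≤ f u) :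
    p * (b - a) ^ 2 ≤ (√(f a) + √(f b)) ^ 2 := by
  have hsq : ∀ u, 0 ≤ √(f u) := fun u => sqrt_nonneg _
  rcases le_or_gt 0 c with hc | hc
  · have hdist : ∀ u, √p * |u - v| ≤ √(f u) := fun u => by
      rw [← sqrt_sq_eq_abs, ← sqrt_mul hp, hf]
      exact sqrt_le_sqrt (le_add_of_nonneg_right hc)
    have hsum : √p * (b - a) ≤ √(f a) + √(f b) := calc
      √p * (b - a) ≤ √p * (|a - v| + |b - v|) := by
        gcongr
        linarith [le_abs_self (b - v), neg_abs_le (a - v)]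
      _ ≤ √(f a) + √(f b) := by linarith [hdist a, hdist b]
    calc p * (b - a) ^ 2 = (√p * (b - a)) ^ 2 := by rw [mul_pow, sq_sqrt hp]
      _ ≤ _ := pow_le_pow_left₀ (mul_nonneg (sqrt_nonneg p) (sub_nonneg.2 hab)) hsum 2
  · rcases lt_or_ge v a with hva | hav
    · have hfa := hnonneg a ⟨le_rfl, hab⟩
      have hfb : p * (b - a) ^ 2 ≤ f b := by
        rw [hf] at hfa ⊢
        nlinarith [mul_nonneg hp (mul_nonneg (sub_nonneg.2 hab) (sub_nonneg.2 hva.le))]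
      calc p * (b - a) ^ 2 ≤ √(f b) ^ 2 := by rwa [sq_sqrt ((mul_nonneg hp (sq_nonneg _)).trans hfb)]
        _ ≤ _ := pow_le_pow_left₀ (hsq b) (le_add_of_nonneg_left (hsq a)) 2
    rcases lt_or_ge b v with hbv | hvb
    · have hfb := hnonneg b ⟨hab, le_rfl⟩
      have hfa : p * (b - a) ^ 2 ≤ f a := by
        rw [hf] at hfb ⊢
        nlinarith [mul_nonneg hp (mul_nonneg (sub_nonneg.2 hab) (sub_nonneg.2 hbv.le))]
      calc p * (b - a) ^ 2 ≤ √(f a) ^ 2 := by rwa [sq_sqrt ((mul_nonneg hp (sq_nonneg _)).trans hfa)]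
        _ ≤ _ := pow_le_pow_left₀ (hsq a) (le_add_of_nonneg_right (hsq b)) 2
    · have := hnonneg v ⟨hav, hvb⟩
      rw [hf, sub_self, zero_pow two_ne_zero, mul_zero, zero_add] at this
      linarith

theorem mul_sq_le_sq_sqrt_add_sqrt {p q₁ r a b : ℝ} (hab : a ≤ b)
    (hnonneg : ∀ u ∈ Icc a b, 0 ≤ p * u ^ 2 + q₁ * u + r) :
    p * (b - a) ^ 2 ≤ (√(p * a ^ 2 + q₁ * a + r) + √(p * b ^ 2 + q₁ * b + r)) ^ 2 := by
  rcases le_or_gt p 0 with hp | hp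
  · exact (mul_nonpos_of_nonpos_of_nonneg hp (sq_nonneg _)).trans (sq_nonneg _)
  · refine mul_sq_le_sq_sqrt_add_sqrt_of_vertex (f := fun u => p * u ^ 2 + q₁ * u + r)
      (v := -q₁ / (2 * p)) (c := r - q₁ ^ 2 / (4 * p)) hp.le (fun u => ?_) hab hnonneg
    field_simp
    ring

theorem quadratic_eq_sq_add_mul_of_sq_eq {p q₁ r a b s t : ℝ} (hab : a ≠ b)
    (hs : s ^ 2 = p * a ^ 2 + q₁ * a + r) (ht : t ^ 2 = p * b ^ 2 + q₁ * b + r) (u : ℝ) :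
    p * u ^ 2 + q₁ * u + r = ((s + t) / (b - a) * u + (-s - (s + t) / (b - a) * a)) ^ 2
      + (((s + t) / (b - a)) ^ 2 - p) * (u - a) * (b - u) := by
  have hd : b - a ≠ 0 := sub_ne_zero.2 hab.symm
  have hA : (s + t) / (b - a) * (b - a) = s + t := div_mul_cancel₀ _ hd
  set A := (s + t) / (b - a)
  apply mul_left_cancel₀ hd
  linear_combination (-(u - a) * (b - a) * A + (u - a) * (s - t)) * hA + (u - b) * hs - (u - a) * ht

/-- Lukács's theorem for quadratics: a quadratic polynomial `q(u) = p u² + q₁ u + r` that is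
nonnegative on `[a, b]` (with `a < b`) can be written as `(α u + β)² + γ (u - a)(b - u)`
with `γ ≥ 0`. -/
theorem lukacs_quadratic
    (p q₁ r a b : ℝ) (hab : a < b)
    (hnonneg : ∀ u ∈ Set.Icc a b, 0 ≤ p * u ^ 2 + q₁ * u + r) :
    ∃ α β γ : ℝ, 0 ≤ γ ∧
      ∀ u : ℝ, p * u ^ 2 + q₁ * u + r = (α * u + β) ^ 2 + γ * (u - a) * (b - u) := by
  set s := √(p * a ^ 2 + q₁ * a + r)
  set t := √(p * b ^ 2 + q₁ * b + r)
  have hs : s ^ 2 = p * a ^ 2 + q₁ * a + r := sq_sqrt (hnonneg a ⟨le_rfl, hab.le⟩)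
  have ht : t ^ 2 = p * b ^ 2 + q₁ * b + r := sq_sqrt (hnonneg b ⟨hab.le, le_rfl⟩)
  refine ⟨_, _, _, ?_, quadratic_eq_sq_add_mul_of_sq_eq hab.ne hs ht⟩
  rw [sub_nonneg, div_pow, le_div_iff₀ (pow_pos (sub_pos.2 hab) 2)]
  exact mul_sq_le_sq_sqrt_add_sqrt hab.le hnonneg
end

section
/- Fix n ≥ 1 and real numbers α, β with −1 ≤ α < β ≤ 1, α = −β, and αβ > −1/n. Set τ = 0, a = 1/(nβ²), b = (n−1)/(n(1−β²)). Then every point x = (x_1, x̄) ∈ ℝ × ℝ^{n−1} with ‖x‖ ≤ 1 and α ≤ x_1 ≤ β satisfies a·x_1² + b·‖x̄‖² ≤ 1. -/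
open scoped RealInnerProductSpace
open Matrix

/-! The ellipsoid inequality is affine in `t = x₁²` once `‖x̄‖² ≤ 1 - x₁²` is used, with slope
`a - b ≥ 0`; so it suffices to check it at `x₁² = β²`, where `a β² + b (1 - β²) = 1` by the
choice of `a` and `b`. The condition `a ≥ b` is exactly `n β² ≤ 1`, i.e. `αβ ≥ -1/n`. -/

lemma mul_add_mul_le_of_le_of_le_one_sub {a b t r c : ℝ} (hb : 0 ≤ b) (hba : b ≤ a)
    (ht : t ≤ c) (hr : r ≤ 1 - t) :
    a * t + b * r ≤ a * c + b * (1 - c) :=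
  calc a * t + b * r ≤ a * t + b * (1 - t) := by gcongr
    _ = b + (a - b) * t := by ring
    _ ≤ b + (a - b) * c := by gcongr
    _ = a * c + b * (1 - c) := by ring

section SlabCoefficients

variable {n β : ℝ}

lemma one_sub_sq_pos_of_mul_sq_lt_one (hn : 1 ≤ n) (hnβ : n * β ^ 2 < 1) : 0 < 1 - β ^ 2 := by
  nlinarith [sq_nonneg β]

lemma slab_coeff_combination_eq_one (hn : 1 ≤ n) (hβ : 0 < β) (hnβ : n * β ^ 2 < 1) :
    1 / (n * β ^ 2) * β ^ 2 + (n - 1) / (n * (1 - β ^ 2)) * (1 - β ^ 2) = 1 := by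
  have := one_sub_sq_pos_of_mul_sq_lt_one hn hnβ
  field_simp
  ring

lemma slab_coeff_le (hn : 1 ≤ n) (hβ : 0 < β) (hnβ : n * β ^ 2 < 1) :
    (n - 1) / (n * (1 - β ^ 2)) ≤ 1 / (n * β ^ 2) := by
  have := one_sub_sq_pos_of_mul_sq_lt_one hn hnβ
  rw [div_le_div_iff₀ (by positivity) (by positivity)]
  nlinarith

lemma slab_coeff_nonneg (hn : 1 ≤ n) (hnβ : n * β ^ 2 < 1) :
    0 ≤ (n - 1) / (n * (1 - β ^ 2)) := by
  have := one_sub_sq_pos_of_mul_sq_lt_one hn hnβ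
  have : 0 ≤ n - 1 := by linarith
  positivity

end SlabCoefficients

/-- Feasibility of the claimed minimum volume circumscribed ellipsoid of a symmetric slab:
with `α = -β`, `αβ > -1/n`, `a = 1/(nβ²)`, `b = (n-1)/(n(1-β²))`, every point `x` of the
slab `{x ∈ B_n : α ≤ x₁ ≤ β}` satisfies `a x₁² + b ‖x̄‖² ≤ 1`, where
`‖x̄‖² = ‖x‖² - x₁²`. -/
theorem symmetric_slab_ellipsoid_feasibility
    (n : ℕ) (hn : 2 ≤ n) (α β : ℝ)
    (h2 : α < β)
    (hsym : α = -β) (hab : α * β > -(1 / n))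
    (a b : ℝ) (ha : a = 1 / (n * β ^ 2)) (hb : b = (n - 1) / (n * (1 - β ^ 2)))
    (x : EuclideanSpace ℝ (Fin n)) (hx : ‖x‖ ≤ 1)
    (hx1 : α ≤ x ⟨0, by omega⟩) (hx2 : x ⟨0, by omega⟩ ≤ β) :
    a * (x ⟨0, by omega⟩) ^ 2 + b * (‖x‖ ^ 2 - (x ⟨0, by omega⟩) ^ 2) ≤ 1 := by
  subst hsym ha hb
  have hn1 : (1 : ℝ) ≤ n := by exact_mod_cast (by omega : 1 ≤ n)
  have hβ : 0 < β := by linarith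
  have hnβ : (n : ℝ) * β ^ 2 < 1 := by
    have : β ^ 2 < 1 / n := by nlinarith
    rwa [lt_div_iff₀ (by positivity), mul_comm] at this
  have hx₁ : x ⟨0, by omega⟩ ^ 2 ≤ β ^ 2 := sq_le_sq' hx1 hx2
  have hnorm : ‖x‖ ^ 2 ≤ 1 := pow_le_one₀ (norm_nonneg x) hx
  calc _ ≤ 1 / (n * β ^ 2) * β ^ 2 + (n - 1) / (n * (1 - β ^ 2)) * (1 - β ^ 2) :=
        mul_add_mul_le_of_le_of_le_one_sub (slab_coeff_nonneg hn1 hnβ)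
          (slab_coeff_le hn1 hβ hnβ) hx₁ (by linarith)
    _ = 1 := slab_coeff_combination_eq_one hn1 hβ hnβ
end

section
/- Let −1 < α < β < 1 with α + β ≠ 0 and αβ > −1/n, n ≥ 1. Let Δ = n²(β²−α²)² + 4(1−α²)(1−β²) and τ = (n(β+α)² + 2(1+αβ) − √Δ) / (2(n+1)(β+α)). Then τ is a root of the quadratic (n+1)(α+β)τ² − (n(α+β)² + 2(1+αβ))τ + (α+β)(1+nαβ) = 0, and α < τ < β. -/
/-!
Writing `q(t) = (n+1)(α+β)t² − (n(α+β)² + 2(1+αβ))t + (α+β)(1+nαβ)`, the `n`-terms cancel at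
the endpoints: `q(α) = (β−α)(1−α²) > 0` and `q(β) = −(β−α)(1−β²) < 0`. Since `α < β` forces
`α + β > 0`, the leading coefficient is positive, so `β` lies strictly between the two roots and
`α` lies below the smaller one, which is `τ`; the discriminant of `q` is `Δ`.
-/

open Set

section Quadratic

variable {a b c : ℝ}

theorem discrim_pos_of_quadratic_neg (ha : 0 < a) {y : ℝ} (hy : a * (y * y) + b * y + c < 0) :
    0 < discrim a b c := by
  have hsq : 4 * a * (a * (y * y) + b * y + c) = (2 * a * y + b) ^ 2 - discrim a b c := by
    rw [discrim]; ring
  nlinarith [sq_nonneg (2 * a * y + b)]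

theorem quadratic_eq_zero_at_root_sub_sqrt (ha : a ≠ 0) (hd : 0 ≤ discrim a b c) :
    a * ((-b - √(discrim a b c)) / (2 * a) * ((-b - √(discrim a b c)) / (2 * a)))
      + b * ((-b - √(discrim a b c)) / (2 * a)) + c = 0 :=
  (quadratic_eq_zero_iff ha (Real.mul_self_sqrt hd).symm _).2 (Or.inr rfl)

theorem root_sub_sqrt_mem_Ioo (ha : 0 < a) {x y : ℝ} (hxy : x < y)
    (hqx : 0 < a * (x * x) + b * x + c) (hqy : a * (y * y) + b * y + c < 0) :
    (-b - √(discrim a b c)) / (2 * a) ∈ Ioo x y := by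
  set s := √(discrim a b c)
  have hs : 0 ≤ s := Real.sqrt_nonneg _
  have hs2 : s ^ 2 = discrim a b c := Real.sq_sqrt (discrim_pos_of_quadratic_neg ha hqy).le
  -- The sign of `q(t)` compares `|2at + b|` with `s`.
  have hsq (t : ℝ) : 4 * a * (a * (t * t) + b * t + c) = (2 * a * t + b) ^ 2 - s ^ 2 := by
    rw [hs2, discrim]; ring
  obtain ⟨hy_gt, hy_lt⟩ : -s < 2 * a * y + b ∧ 2 * a * y + b < s :=
    abs_lt_of_sq_lt_sq'
      (by linarith [hsq y, mul_neg_of_pos_of_neg (by positivity : (0 : ℝ) < 4 * a) hqy]) hs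
  have hx_lt : 2 * a * x + b < -s := by
    have hsq_lt : s ^ 2 < (2 * a * x + b) ^ 2 := by
      linarith [hsq x, mul_pos (by positivity : (0 : ℝ) < 4 * a) hqx]
    have hlt : s < |2 * a * x + b| := by
      simpa only [abs_of_nonneg hs] using sq_lt_sq.1 hsq_lt
    rcases lt_abs.1 hlt with h | h
    · nlinarith
    · linarith
  constructor
  · rw [lt_div_iff₀ (by positivity)]; linarith
  · rw [div_lt_iff₀ (by positivity)]; linarith

end Quadratic

section Slab

variable (n α β : ℝ)

theorem slab_quadratic_eval_left :
    (n + 1) * (α + β) * (α * α) + -(n * (α + β) ^ 2 + 2 * (1 + α * β)) * α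
      + (α + β) * (1 + n * α * β) = (β - α) * (1 - α ^ 2) := by
  ring

theorem slab_quadratic_eval_right :
    (n + 1) * (α + β) * (β * β) + -(n * (α + β) ^ 2 + 2 * (1 + α * β)) * β
      + (α + β) * (1 + n * α * β) = -((β - α) * (1 - β ^ 2)) := by
  ring

theorem slab_discrim :
    discrim ((n + 1) * (α + β)) (-(n * (α + β) ^ 2 + 2 * (1 + α * β))) ((α + β) * (1 + n * α * β))
      = n ^ 2 * (β ^ 2 - α ^ 2) ^ 2 + 4 * (1 - α ^ 2) * (1 - β ^ 2) := by
  rw [discrim]; ring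

end Slab

theorem slab_tau_root_and_bounds_general
    (n : ℕ) (α β : ℝ)
    (h1 : -1 < α) (h2 : α < β) (h3 : β < 1)
    (hsum : α + β ≠ 0) (hsq : α ^ 2 ≤ β ^ 2)
    (Δ τ : ℝ)
    (hΔ : Δ = (n : ℝ) ^ 2 * (β ^ 2 - α ^ 2) ^ 2 + 4 * (1 - α ^ 2) * (1 - β ^ 2))
    (hτ : τ = ((n : ℝ) * (β + α) ^ 2 + 2 * (1 + α * β) - Real.sqrt Δ)
        / (2 * ((n : ℝ) + 1) * (β + α))) :
    ((n : ℝ) + 1) * (α + β) * τ ^ 2 - ((n : ℝ) * (α + β) ^ 2 + 2 * (1 + α * β)) * τ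
        + (α + β) * (1 + (n : ℝ) * α * β) = 0
      ∧ α < τ ∧ τ < β := by
  have hpos : 0 < α + β := lt_of_le_of_ne (by nlinarith) hsum.symm
  have ha : 0 < ((n : ℝ) + 1) * (α + β) := by positivity
  have hqα : 0 < (n + 1) * (α + β) * (α * α) + -(n * (α + β) ^ 2 + 2 * (1 + α * β)) * α
      + (α + β) * (1 + n * α * β) := by
    rw [slab_quadratic_eval_left]; exact mul_pos (by linarith) (by nlinarith)
  have hqβ : (n + 1) * (α + β) * (β * β) + -(n * (α + β) ^ 2 + 2 * (1 + α * β)) * β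
      + (α + β) * (1 + n * α * β) < 0 := by
    rw [slab_quadratic_eval_right]; exact neg_neg_of_pos (mul_pos (by linarith) (by nlinarith))
  have hτ_eq : τ = (-(-((n : ℝ) * (α + β) ^ 2 + 2 * (1 + α * β)))
      - √(discrim (((n : ℝ) + 1) * (α + β)) (-((n : ℝ) * (α + β) ^ 2 + 2 * (1 + α * β)))
          ((α + β) * (1 + (n : ℝ) * α * β)))) / (2 * (((n : ℝ) + 1) * (α + β))) := by
    rw [hτ, slab_discrim, ← hΔ]; ring
  have hroot := quadratic_eq_zero_at_root_sub_sqrt ha.ne' (discrim_pos_of_quadratic_neg ha hqβ).le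
  obtain ⟨hατ, hτβ⟩ := root_sub_sqrt_mem_Ioo ha h2 hqα hqβ
  rw [← hτ_eq] at hroot hατ hτβ
  exact ⟨by linear_combination hroot, hατ, hτβ⟩

/-- The parameter `τ` of the minimum volume circumscribed ellipsoid of a slab in case (iii):
`τ` as defined (with the minus sign in front of `√Δ`) is a root of the quadratic
`(n+1)(α+β)τ² − (n(α+β)² + 2(1+αβ))τ + (α+β)(1+nαβ) = 0` and satisfies `α < τ < β`. -/
theorem slab_tau_root_and_bounds
    (n : ℕ) (hn : 1 ≤ n) (α β : ℝ)
    (h1 : -1 < α) (h2 : α < β) (h3 : β < 1)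
    (hsum : α + β ≠ 0) (hab : α * β > -(1 / n)) (hsq : α ^ 2 ≤ β ^ 2)
    (Δ τ : ℝ)
    (hΔ : Δ = (n : ℝ) ^ 2 * (β ^ 2 - α ^ 2) ^ 2 + 4 * (1 - α ^ 2) * (1 - β ^ 2))
    (hτ : τ = ((n : ℝ) * (β + α) ^ 2 + 2 * (1 + α * β) - Real.sqrt Δ)
        / (2 * ((n : ℝ) + 1) * (β + α))) :
    ((n : ℝ) + 1) * (α + β) * τ ^ 2 - ((n : ℝ) * (α + β) ^ 2 + 2 * (1 + α * β)) * τ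
        + (α + β) * (1 + (n : ℝ) * α * β) = 0
      ∧ α < τ ∧ τ < β :=
  slab_tau_root_and_bounds_general n α β h1 h2 h3 hsum hsq Δ τ hΔ hτ
end
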